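/- arXiv:1602.03915 — 6 statements merged into one kernel-verified Lean document; each statement's English description precedes it below -/
import Mathlib

section
/- For potential outcomes Y_i(k) of N units (N ≥ 2) under K treatments, the following are equivalent: (i) there exist real constants C(k,l) such that Y_i(l) = Y_i(k) + C(k,l) for all units i and all pairs of treatments k,l (strict additivity); (ii) the finite-population covariance matrix S² is constant, i.e., S²(k,l) = S²(1,1) for all k,l. -/
open Finset

/-- For potential outcomes `Y i (k)` of `N ≥ 2` units under `K` treatments,
strict additivity (there exist constants `C k l` with `Y_i(l) = Y_i(k) + C(k,l)` for all units
and treatment pairs) holds if and only if the finite-population covariance matrix is constant,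
i.e. `S²(k,l) = S²(1,1)` for all `k, l`. -/
theorem strict_additivity_iff_constant_covariance
    (N K : ℕ) (hN : 2 ≤ N) [NeZero K]
    (Y : Fin K → Fin N → ℝ)
    (Ybar : Fin K → ℝ) (hYbar : ∀ k, Ybar k = (N : ℝ)⁻¹ * ∑ i, Y k i)
    (S2 : Fin K → Fin K → ℝ)
    (hS2 : ∀ k l, S2 k l = ((N : ℝ) - 1)⁻¹ * ∑ i, (Y k i - Ybar k) * (Y l i - Ybar l)) :
    (∃ C : Fin K → Fin K → ℝ, ∀ (i : Fin N) (k l : Fin K), Y l i = Y k i + C k l)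
      ↔ (∀ k l : Fin K, S2 k l = S2 0 0) := by
  have hNR : (N : ℝ) ≠ 0 := by
    have : (2:ℝ) ≤ (N:ℝ) := by exact_mod_cast hN
    linarith
  have hN1 : (N : ℝ) - 1 ≠ 0 := by
    have : (2:ℝ) ≤ (N:ℝ) := by exact_mod_cast hN
    intro h; linarith
  constructor
  · rintro ⟨C, hC⟩ k l
    have hbar : ∀ m : Fin K, Ybar m = Ybar 0 + C 0 m := by
      intro m
      rw [hYbar, hYbar]
      have hm : ∀ i, Y m i = Y 0 i + C 0 m := fun i => hC i 0 m
      simp_rw [hm]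
      rw [Finset.sum_add_distrib, Finset.sum_const, card_univ, Fintype.card_fin]
      field_simp
      ring
    have hdev : ∀ (m : Fin K) (i : Fin N), Y m i - Ybar m = Y 0 i - Ybar 0 := by
      intro m i
      rw [hbar m, hC i 0 m]; ring
    rw [hS2, hS2]
    simp_rw [hdev]
  · intro h
    have key : ∀ (k l : Fin K) (i : Fin N), Y k i - Ybar k = Y l i - Ybar l := by
      intro k l i
      have hsum : ∑ j, ((Y k j - Ybar k) - (Y l j - Ybar l))^2 = 0 := by
        have e : ∑ j, ((Y k j - Ybar k) - (Y l j - Ybar l))^2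
            = ((N:ℝ) - 1) * (S2 k k - 2 * S2 k l + S2 l l) := by
          rw [hS2 k k, hS2 k l, hS2 l l]
          have expand : ∑ j : Fin N, ((Y k j - Ybar k) - (Y l j - Ybar l))^2
              = (∑ j, (Y k j - Ybar k)*(Y k j - Ybar k))
                - 2*(∑ j, (Y k j - Ybar k)*(Y l j - Ybar l))
                + ∑ j, (Y l j - Ybar l)*(Y l j - Ybar l) := by
            rw [Finset.mul_sum, ← Finset.sum_sub_distrib, ← Finset.sum_add_distrib]
            exact Finset.sum_congr rfl fun j _ => by ring
          rw [expand]; field_simp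
        rw [e, h k k, h k l, h l l]
        ring
      have hz : ((Y k i - Ybar k) - (Y l i - Ybar l))^2 = 0 := by
        have := (Finset.sum_eq_zero_iff_of_nonneg
          (fun j _ => sq_nonneg ((Y k j - Ybar k) - (Y l j - Ybar l)))).mp hsum
        exact this i (Finset.mem_univ i)
      have := pow_eq_zero_iff (n := 2) (by norm_num) |>.mp hz
      linarith [sub_eq_zero.mp this]
    refine ⟨fun k l => Ybar l - Ybar k, fun i k l => ?_⟩
    have := key k l i
    show Y l i = Y k i + (Ybar l - Ybar k)
    linarith
end

section
/- The coefficient matrices of the split-plot and completely randomized designs satisfy the exact identity (W-1)·C_btw + W(M-1)·C_in = (N-1)·C, where N = WM, N₁ = W₋₁M₋₁, N₂ = W₋₁M₊₁, N₃ = W₊₁M₋₁, N₄ = W₊₁M₊₁. -/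
/-!
All three scalar prefactors collapse to `1/N`, and `N/N₁ = (1 + r_A)(1 + r_B)` (similarly for
`N₂, N₃, N₄` with `r_A⁻¹`, `r_B⁻¹`). The remaining identity is entrywise polynomial, e.g.
`r_A + (1 + r_A) r_B = (1 + r_A)(1 + r_B) - 1` on the diagonal and `r_A - (1 + r_A) = -1` off it.
-/

open Matrix

theorem smul_inv_mul_smul {K V : Type*} [Field K] [AddCommGroup V] [Module K V]
    {c : K} (hc : c ≠ 0) (N : K) (A : V) : c • (N * c)⁻¹ • A = N⁻¹ • A := by
  rw [smul_smul, _root_.mul_inv_rev, mul_inv_cancel_left₀ hc]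

theorem add_mul_add_div_mul {K : Type*} [Field K] {a c : K} (ha : a ≠ 0) (hc : c ≠ 0)
    (b d : K) : (a + b) * (c + d) / (a * c) = (1 + b / a) * (1 + d / c) := by
  field_simp

/-- `x, x', y, y'` play the roles of `r_A, r_A⁻¹, r_B, r_B⁻¹`. -/
theorem splitPlot_add_eq_diagonal_sub_ones {R : Type*} [CommRing R] (x x' y y' : R) :
    !![x, x, -1, -1; x, x, -1, -1; -1, -1, x', x'; -1, -1, x', x'] +
      !![(1 + x) * y, -(1 + x), 0, 0;
         -(1 + x), (1 + x) * y', 0, 0;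
         0, 0, (1 + x') * y, -(1 + x');
         0, 0, -(1 + x'), (1 + x') * y'] =
      diagonal ![(1 + x) * (1 + y), (1 + x) * (1 + y'), (1 + x') * (1 + y), (1 + x') * (1 + y')]
        - of fun _ _ => 1 := by
  ext i j
  fin_cases i <;> fin_cases j <;> simp <;> ring

/-- With `W = W₋₁ + W₊₁`, `M = M₋₁ + M₊₁`, `N = WM`,
`N₁ = W₋₁M₋₁`, `N₂ = W₋₁M₊₁`, `N₃ = W₊₁M₋₁`, `N₄ = W₊₁M₊₁`, `r_A = W₊₁/W₋₁`,
`r_B = M₊₁/M₋₁`, the coefficient matrices of the split-plot and completely randomized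
designs satisfy `(W-1)·C_btw + W(M-1)·C_in = (N-1)·C`. -/
theorem coefficient_matrix_identity
    (Wm Wp Mm Mp : ℕ) (hWm : 0 < Wm) (hWp : 0 < Wp) (hMm : 0 < Mm) (hMp : 0 < Mp) :
    let W : ℝ := (Wm : ℝ) + (Wp : ℝ)
    let M : ℝ := (Mm : ℝ) + (Mp : ℝ)
    let N : ℝ := W * M
    let rA : ℝ := (Wp : ℝ) / (Wm : ℝ)
    let rB : ℝ := (Mp : ℝ) / (Mm : ℝ)
    let C : Matrix (Fin 4) (Fin 4) ℝ :=
      (N * (N - 1))⁻¹ •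
        (Matrix.diagonal ![N / ((Wm : ℝ) * (Mm : ℝ)), N / ((Wm : ℝ) * (Mp : ℝ)),
            N / ((Wp : ℝ) * (Mm : ℝ)), N / ((Wp : ℝ) * (Mp : ℝ))]
          - Matrix.of fun _ _ => (1 : ℝ))
    let Cbtw : Matrix (Fin 4) (Fin 4) ℝ :=
      (N * (W - 1))⁻¹ •
        !![rA, rA, -1, -1; rA, rA, -1, -1;
           -1, -1, rA⁻¹, rA⁻¹; -1, -1, rA⁻¹, rA⁻¹]
    let Cin : Matrix (Fin 4) (Fin 4) ℝ :=
      (N * W * (M - 1))⁻¹ •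
        !![(1 + rA) * rB, -(1 + rA), 0, 0;
           -(1 + rA), (1 + rA) * rB⁻¹, 0, 0;
           0, 0, (1 + rA⁻¹) * rB, -(1 + rA⁻¹);
           0, 0, -(1 + rA⁻¹), (1 + rA⁻¹) * rB⁻¹]
    (W - 1) • Cbtw + (W * (M - 1)) • Cin = (N - 1) • C := by
  intro W M N rA rB C Cbtw Cin
  have hWm' : (1 : ℝ) ≤ Wm := by exact_mod_cast hWm
  have hWp' : (1 : ℝ) ≤ Wp := by exact_mod_cast hWp
  have hMm' : (1 : ℝ) ≤ Mm := by exact_mod_cast hMm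
  have hMp' : (1 : ℝ) ≤ Mp := by exact_mod_cast hMp
  have hW : W - 1 ≠ 0 := by simp only [W]; linarith
  have hWM : W * (M - 1) ≠ 0 := mul_ne_zero (by simp only [W]; linarith) (by simp only [M]; linarith)
  have hN : N - 1 ≠ 0 := by simp only [N, W, M]; nlinarith
  have hN₁ : N / (Wm * Mm) = (1 + rA) * (1 + rB) :=
    add_mul_add_div_mul (by positivity) (by positivity) _ _
  have hN₂ : N / (Wm * Mp) = (1 + rA) * (1 + rB⁻¹) := by
    rw [inv_div, ← add_mul_add_div_mul (by positivity) (by positivity), add_comm (Mp : ℝ)]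
  have hN₃ : N / (Wp * Mm) = (1 + rA⁻¹) * (1 + rB) := by
    rw [inv_div, ← add_mul_add_div_mul (by positivity) (by positivity), add_comm (Wp : ℝ)]
  have hN₄ : N / (Wp * Mp) = (1 + rA⁻¹) * (1 + rB⁻¹) := by
    rw [inv_div, inv_div, ← add_mul_add_div_mul (by positivity) (by positivity),
      add_comm (Wp : ℝ), add_comm (Mp : ℝ)]
  simp only [C, Cbtw, Cin]
  rw [smul_inv_mul_smul hW, mul_assoc N W, smul_inv_mul_smul hWM, smul_inv_mul_smul hN,
    ← smul_add, splitPlot_add_eq_diagonal_sub_ones, hN₁, hN₂, hN₃, hN₄]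
end

section
/- Under a 2² completely randomized design with arm sizes N₁,…,N₄, the estimator τ̂_F is unbiased for τ_F with sampling variance Var_CR(τ̂_F) = 4⁻¹(N-1)·g_F^T (C ∘ S²) g_F, where C = [N(N-1)]⁻¹(diag{N/N₁,…,N/N₄} - J₄) and S² is the 4×4 finite-population covariance matrix of the potential outcomes. -/
/-! Relabelling the units permutes the assignments with prescribed arm sizes, and permutations of
the units act transitively on ordered pairs of distinct units. Hence a unit lies in arm `k` with
probability `N_k / N`, and two distinct units lie in arms `k`, `l` with a common probability, which
counting over all pairs of units identifies as `(N_k N_l - δ_kl N_k) / (N (N - 1))`. Unbiasedness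
is then linearity. For the variance, write `τ̂_F - τ_F = 2⁻¹ ∑ g_k (Ȳ^obs(k) - Ȳ(k))` and expand
the square; since centred outcomes sum to zero, the off-diagonal pairs of units contribute minus
that pair probability times the diagonal, which yields `C(k, l)`. -/

open Finset

def gA : Fin 4 → ℝ := ![-1, -1, 1, 1]
def gB : Fin 4 → ℝ := ![-1, 1, -1, 1]
def gAB : Fin 4 → ℝ := ![1, -1, -1, 1]

open scoped BigOperators

theorem Finset.sum_filter_eq_sum_mul_boole {α R : Type*} [NonAssocSemiring R] (s : Finset α)
    (p : α → Prop) [DecidablePred p] (f : α → R) :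
    ∑ a ∈ s with p a, f a = ∑ a ∈ s, f a * if p a then 1 else 0 := by
  simp_rw [mul_boole, sum_filter]

section CompletelyRandomized

variable {ι κ : Type*} [Fintype ι] [DecidableEq ι] [Fintype κ] [DecidableEq κ]

variable (ι) in
def completelyRandomized (n : κ → ℕ) : Finset (ι → κ) :=
  {T | ∀ k, #{i | T i = k} = n k}

variable {n : κ → ℕ}

theorem mem_completelyRandomized {T : ι → κ} :
    T ∈ completelyRandomized ι n ↔ ∀ k, #{i | T i = k} = n k := by
  simp [completelyRandomized]

theorem comp_perm_mem_completelyRandomized (σ : Equiv.Perm ι) {T : ι → κ} :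
    T ∘ σ ∈ completelyRandomized ι n ↔ T ∈ completelyRandomized ι n := by
  have hcard : ∀ k, #{i | T (σ i) = k} = #{i | T i = k} := fun k =>
    card_equiv σ fun i => by simp
  simp only [mem_completelyRandomized, Function.comp_apply, hcard]

section Symmetry

variable {M : Type*} [AddCommMonoid M] [Module ℚ≥0 M]

theorem expect_completelyRandomized_comp_perm (σ : Equiv.Perm ι) (f : (ι → κ) → M) :
    𝔼 T ∈ completelyRandomized ι n, f (T ∘ σ) = 𝔼 T ∈ completelyRandomized ι n, f T :=
  expect_equiv (σ.symm.arrowCongr (.refl κ))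
    (fun _ => (comp_perm_mem_completelyRandomized σ).symm) (fun _ _ => rfl)

theorem expect_completelyRandomized_comp_injective {α : Type*} [Finite α] {u v : α → ι}
    (hu : u.Injective) (hv : v.Injective) (f : (α → κ) → M) :
    𝔼 T ∈ completelyRandomized ι n, f (T ∘ u) = 𝔼 T ∈ completelyRandomized ι n, f (T ∘ v) := by
  obtain ⟨σ, hσ⟩ := Equiv.Perm.exists_extending_pair u v hu hv
  rw [← expect_completelyRandomized_comp_perm σ (fun T => f (T ∘ u))]
  refine expect_congr rfl fun T _ => congrArg f ?_
  ext a
  simp [hσ]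

end Symmetry

theorem sum_indicator_of_mem_completelyRandomized {T : ι → κ}
    (hT : T ∈ completelyRandomized ι n) (k : κ) :
    ∑ i, (if T i = k then 1 else 0 : ℝ) = n k := by
  simp [(mem_completelyRandomized.1 hT) k]

theorem expect_indicator_completelyRandomized (hD : (completelyRandomized ι n).Nonempty)
    (i : ι) (k : κ) :
    𝔼 T ∈ completelyRandomized ι n, (if T i = k then 1 else 0 : ℝ)
      = n k / Fintype.card ι := by
  have hconst : ∀ j, 𝔼 T ∈ completelyRandomized ι n, (if T j = k then 1 else 0 : ℝ)
      = 𝔼 T ∈ completelyRandomized ι n, (if T i = k then 1 else 0 : ℝ) := fun j =>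
    expect_completelyRandomized_comp_injective (u := fun _ : Unit => j) (v := fun _ => i)
      (Function.injective_of_subsingleton _) (Function.injective_of_subsingleton _)
      (fun t => if t () = k then 1 else 0)
  have htotal : ∑ j, 𝔼 T ∈ completelyRandomized ι n, (if T j = k then 1 else 0 : ℝ) = n k := by
    rw [← expect_sum_comm, expect_congr rfl fun T hT =>
      sum_indicator_of_mem_completelyRandomized hT k, expect_const hD]
  have : Nonempty ι := ⟨i⟩
  rw [sum_congr rfl fun j _ => hconst j, sum_const, card_univ, nsmul_eq_mul] at htotal
  rw [← htotal, mul_div_cancel_left₀ _ (by positivity)]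

theorem expect_indicator_mul_indicator_self_completelyRandomized
    (hD : (completelyRandomized ι n).Nonempty) (i : ι) (k l : κ) :
    𝔼 T ∈ completelyRandomized ι n, (if T i = k then 1 else 0 : ℝ) * (if T i = l then 1 else 0)
      = if k = l then (n k / Fintype.card ι : ℝ) else 0 := by
  split_ifs with hkl
  · subst hkl
    simp_rw [ite_zero_mul_ite_zero, and_self, mul_one]
    exact expect_indicator_completelyRandomized hD i k
  · refine expect_eq_zero fun T _ => ?_
    rw [ite_zero_mul_ite_zero]
    exact if_neg fun h => hkl (h.1.symm.trans h.2)

theorem expect_indicator_mul_indicator_completelyRandomized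
    (hD : (completelyRandomized ι n).Nonempty) {i j : ι} (hij : i ≠ j) (k l : κ) :
    𝔼 T ∈ completelyRandomized ι n, (if T i = k then 1 else 0 : ℝ) * (if T j = l then 1 else 0)
      = (n k * n l - if k = l then (n k : ℝ) else 0)
          / (Fintype.card ι * (Fintype.card ι - 1)) := by
  set E : ι → ι → ℝ := fun i j => 𝔼 T ∈ completelyRandomized ι n,
    (if T i = k then 1 else 0 : ℝ) * (if T j = l then 1 else 0) with hE
  have hconst : ∀ i' j', i' ≠ j' → E i' j' = E i j := fun i' j' h =>
    expect_completelyRandomized_comp_injective (injective_pair_iff_ne.2 h)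
      (injective_pair_iff_ne.2 hij)
      (fun t => (if t 0 = k then 1 else 0 : ℝ) * (if t 1 = l then 1 else 0))
  have htotal : ∑ i', ∑ j', E i' j' = n k * n l := by
    simp only [hE, ← expect_sum_comm]
    rw [expect_congr rfl fun T hT => by
      rw [← sum_mul_sum, sum_indicator_of_mem_completelyRandomized hT k,
        sum_indicator_of_mem_completelyRandomized hT l], expect_const hD]
  have hrow : ∀ i', ∑ j', E i' j' = E i' i' + (Fintype.card ι - 1) * E i j := by
    intro i'
    rw [← add_sum_erase _ _ (mem_univ i'),
      sum_congr rfl fun j' hj' => hconst i' j' (ne_of_mem_erase hj').symm, sum_const,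
      card_erase_of_mem (mem_univ _), card_univ, nsmul_eq_mul,
      Nat.cast_pred (Fintype.card_pos_iff.2 ⟨i'⟩)]
  have hdiag : ∑ i', E i' i' = if k = l then (n k : ℝ) else 0 := by
    have : (Fintype.card ι : ℝ) ≠ 0 := by have : Nonempty ι := ⟨i⟩; positivity
    simp only [hE, expect_indicator_mul_indicator_self_completelyRandomized hD]
    split_ifs
    · simp only [sum_const, card_univ, nsmul_eq_mul]
      field_simp
    · simp
  have hN : (1 : ℝ) < Fintype.card ι := by
    exact_mod_cast Fintype.one_lt_card_iff_nontrivial.2 ⟨⟨i, j, hij⟩⟩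
  rw [sum_congr rfl fun i' _ => hrow i', sum_add_distrib, hdiag, sum_const, card_univ,
    nsmul_eq_mul] at htotal
  rw [eq_div_iff (by nlinarith)]
  linarith

theorem expect_sum_filter_completelyRandomized (hD : (completelyRandomized ι n).Nonempty)
    (k : κ) (a : ι → ℝ) :
    𝔼 T ∈ completelyRandomized ι n, ∑ i with T i = k, a i
      = n k / Fintype.card ι * ∑ i, a i := by
  simp_rw [sum_filter_eq_sum_mul_boole, expect_sum_comm, ← mul_expect,
    expect_indicator_completelyRandomized hD, mul_sum]
  exact sum_congr rfl fun i _ => mul_comm _ _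

theorem expect_sum_filter_mul_sum_filter_completelyRandomized
    (hD : (completelyRandomized ι n).Nonempty) (hι : 1 < Fintype.card ι)
    (a : ι → ℝ) {b : ι → ℝ} (hb : ∑ i, b i = 0) (k l : κ) :
    𝔼 T ∈ completelyRandomized ι n, (∑ i with T i = k, a i) * (∑ i with T i = l, b i)
      = n k * ((if k = l then (Fintype.card ι : ℝ) else 0) - n l)
          / (Fintype.card ι * (Fintype.card ι - 1)) * ∑ i, a i * b i := by
  set m := (n k * n l - if k = l then (n k : ℝ) else 0)
    / (Fintype.card ι * (Fintype.card ι - 1))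
  have hrow : ∀ i, ∑ j, a i * b j * 𝔼 T ∈ completelyRandomized ι n,
      (if T i = k then 1 else 0 : ℝ) * (if T j = l then 1 else 0)
      = ((if k = l then (n k / Fintype.card ι : ℝ) else 0) - m) * (a i * b i) := by
    intro i
    rw [← add_sum_erase _ _ (mem_univ i),
      expect_indicator_mul_indicator_self_completelyRandomized hD,
      sum_congr rfl fun j hj => by
        rw [expect_indicator_mul_indicator_completelyRandomized hD (ne_of_mem_erase hj).symm],
      ← sum_mul, ← mul_sum, sum_erase_eq_sub (mem_univ i), hb]
    ring
  calc _ = ∑ i, ∑ j, a i * b j * 𝔼 T ∈ completelyRandomized ι n,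
        (if T i = k then 1 else 0 : ℝ) * (if T j = l then 1 else 0) := by
        simp_rw [sum_filter_eq_sum_mul_boole, sum_mul_sum, expect_sum_comm, mul_expect]
        refine sum_congr rfl fun i _ => sum_congr rfl fun j _ =>
          expect_congr rfl fun T _ => by ring
    _ = ∑ i, ((if k = l then (n k / Fintype.card ι : ℝ) else 0) - m) * (a i * b i) :=
        sum_congr rfl fun i _ => hrow i
    _ = _ := by
        rw [← mul_sum]
        congr 1
        have hN : (1 : ℝ) < Fintype.card ι := by exact_mod_cast hι
        have : (Fintype.card ι : ℝ) - 1 ≠ 0 := by linarith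
        have : (Fintype.card ι : ℝ) ≠ 0 := by linarith
        simp only [m]
        split_ifs with hkl
        · subst hkl
          field_simp
          ring
        · field_simp
          ring

end CompletelyRandomized

noncomputable section FinitePopulation

variable {ι κ : Type*} [Fintype ι]

def populationMean (Y : ι → κ → ℝ) (k : κ) : ℝ :=
  (Fintype.card ι : ℝ)⁻¹ * ∑ i, Y i k

def populationCovariance (Y : ι → κ → ℝ) (k l : κ) : ℝ :=
  ((Fintype.card ι : ℝ) - 1)⁻¹ * ∑ i, (Y i k - populationMean Y k) * (Y i l - populationMean Y l)

theorem sum_sub_populationMean (Y : ι → κ → ℝ) (k : κ) :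
    ∑ i, (Y i k - populationMean Y k) = 0 := by
  rcases isEmpty_or_nonempty ι with hι | hι
  · simp
  · rw [sum_sub_distrib, sum_const, card_univ, nsmul_eq_mul, populationMean]
    field_simp
    ring

end FinitePopulation

noncomputable section ArmMeans

variable {ι κ : Type*} [Fintype ι] [DecidableEq ι] [Fintype κ] [DecidableEq κ]

def armMean (n : κ → ℕ) (Y : ι → κ → ℝ) (T : ι → κ) (k : κ) : ℝ :=
  (n k : ℝ)⁻¹ * ∑ i with T i = k, Y i k

variable (ι) in
def crdVarianceCoeff (n : κ → ℕ) (k l : κ) : ℝ :=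
  ((Fintype.card ι : ℝ) * ((Fintype.card ι : ℝ) - 1))⁻¹
    * ((if k = l then (Fintype.card ι : ℝ) / (n k : ℝ) else 0) - 1)

variable {n : κ → ℕ} {Y : ι → κ → ℝ}

theorem expect_armMean (hD : (completelyRandomized ι n).Nonempty) {k : κ} (hk : n k ≠ 0) :
    𝔼 T ∈ completelyRandomized ι n, armMean n Y T k = populationMean Y k := by
  simp only [armMean, populationMean, ← mul_expect, expect_sum_filter_completelyRandomized hD]
  field_simp

theorem armMean_sub_populationMean {T : ι → κ} (hT : T ∈ completelyRandomized ι n) {k : κ}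
    (hk : n k ≠ 0) :
    armMean n Y T k - populationMean Y k
      = (n k : ℝ)⁻¹ * ∑ i with T i = k, (Y i k - populationMean Y k) := by
  rw [sum_sub_distrib, sum_const, (mem_completelyRandomized.1 hT) k, nsmul_eq_mul, armMean]
  field_simp

theorem expect_armMean_sub_mul_armMean_sub (hD : (completelyRandomized ι n).Nonempty)
    (hι : 1 < Fintype.card ι) {k l : κ} (hk : n k ≠ 0) (hl : n l ≠ 0) :
    𝔼 T ∈ completelyRandomized ι n,
        (armMean n Y T k - populationMean Y k) * (armMean n Y T l - populationMean Y l)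
      = ((Fintype.card ι : ℝ) - 1)
          * (crdVarianceCoeff ι n k l * populationCovariance Y k l) := by
  rw [expect_congr rfl fun T hT => by
      rw [armMean_sub_populationMean hT hk, armMean_sub_populationMean hT hl, mul_mul_mul_comm],
    ← mul_expect, expect_sum_filter_mul_sum_filter_completelyRandomized hD hι _
      (sum_sub_populationMean Y l), crdVarianceCoeff, populationCovariance]
  have hN : (1 : ℝ) < Fintype.card ι := by exact_mod_cast hι
  have : (Fintype.card ι : ℝ) - 1 ≠ 0 := by linarith
  have : (Fintype.card ι : ℝ) ≠ 0 := by linarith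
  split_ifs with hkl
  · subst hkl
    field_simp
  · field_simp
    ring

theorem expect_sum_mul_armMean (hD : (completelyRandomized ι n).Nonempty)
    (hn : ∀ k, n k ≠ 0) (c : κ → ℝ) :
    𝔼 T ∈ completelyRandomized ι n, ∑ k, c k * armMean n Y T k
      = ∑ k, c k * populationMean Y k := by
  simp only [expect_sum_comm, ← mul_expect, expect_armMean hD (hn _)]

theorem expect_sq_sum_mul_armMean_sub (hD : (completelyRandomized ι n).Nonempty)
    (hι : 1 < Fintype.card ι) (hn : ∀ k, n k ≠ 0) (c : κ → ℝ) :
    𝔼 T ∈ completelyRandomized ι n,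
        (∑ k, c k * armMean n Y T k - ∑ k, c k * populationMean Y k) ^ 2
      = ((Fintype.card ι : ℝ) - 1) * ∑ k, ∑ l, c k * c l
          * (crdVarianceCoeff ι n k l * populationCovariance Y k l) := by
  have hsq : ∀ T, (∑ k, c k * armMean n Y T k - ∑ k, c k * populationMean Y k) ^ 2
      = ∑ k, ∑ l, c k * c l
          * ((armMean n Y T k - populationMean Y k) * (armMean n Y T l - populationMean Y l)) :=
    fun T => by
      rw [← sum_sub_distrib, sq, sum_mul_sum]
      exact sum_congr rfl fun k _ => sum_congr rfl fun l _ => by ring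
  simp only [hsq, expect_sum_comm, ← mul_expect,
    expect_armMean_sub_mul_armMean_sub hD hι (hn _) (hn _), mul_sum]
  exact sum_congr rfl fun k _ => sum_congr rfl fun l _ => by ring

end ArmMeans

theorem crd_estimator_unbiased_and_variance_general
    (N : ℕ) (hN : 2 ≤ N) (arm : Fin 4 → ℕ) (harm : ∀ k, 0 < arm k)
    (Y : Fin N → Fin 4 → ℝ)
    (g : Fin 4 → ℝ)
    (A : Finset (Fin N → Fin 4))
    (hA : A = Finset.univ.filter
      (fun T => ∀ j, (Finset.univ.filter (fun i => T i = j)).card = arm j))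
    (hAne : A.Nonempty) :
    ((A.card : ℝ)⁻¹ * ∑ T ∈ A,
        (2⁻¹ * ∑ k, g k * ((arm k : ℝ)⁻¹ *
          ∑ i ∈ Finset.univ.filter (fun i => T i = k), Y i k))
      = 2⁻¹ * ∑ k, g k * ((N : ℝ)⁻¹ * ∑ i, Y i k)) ∧
    ((A.card : ℝ)⁻¹ * ∑ T ∈ A,
        ((2⁻¹ * ∑ k, g k * ((arm k : ℝ)⁻¹ *
            ∑ i ∈ Finset.univ.filter (fun i => T i = k), Y i k))
          - 2⁻¹ * ∑ k, g k * ((N : ℝ)⁻¹ * ∑ i, Y i k)) ^ 2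
      = 4⁻¹ * ((N : ℝ) - 1) * ∑ k, ∑ l, g k * g l *
          ((((N : ℝ) * ((N : ℝ) - 1))⁻¹
              * ((if k = l then (N : ℝ) / (arm k : ℝ) else 0) - 1))
            * (((N : ℝ) - 1)⁻¹ * ∑ i,
                (Y i k - (N : ℝ)⁻¹ * ∑ i', Y i' k)
                  * (Y i l - (N : ℝ)⁻¹ * ∑ i', Y i' l)))) := by
  -- the two filters differ only in their decidability instances
  obtain rfl : A = completelyRandomized (Fin N) arm := by
    rw [hA, completelyRandomized]
    congr 1
  have hn : ∀ k, arm k ≠ 0 := fun k => (harm k).ne'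
  have hι : 1 < Fintype.card (Fin N) := by rwa [Fintype.card_fin]
  have hmean := expect_sum_mul_armMean (Y := Y) hAne hn g
  have hvar := expect_sq_sum_mul_armMean_sub (Y := Y) hAne hι hn g
  rw [expect_eq_sum_div_card, div_eq_inv_mul] at hmean hvar
  simp only [armMean, populationMean, populationCovariance, crdVarianceCoeff,
    Fintype.card_fin] at hmean hvar
  constructor
  · rw [← mul_sum, mul_left_comm, hmean]
  · simp_rw [← mul_sub, mul_pow]
    rw [← mul_sum, mul_left_comm, hvar]
    ring

/-- Under a `2²` completely randomized design (uniform over partitions of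
`N` units into arms of sizes `N₁,…,N₄`), the estimator `τ̂_F` is unbiased for `τ_F` and has
sampling variance `4⁻¹(N-1)·g_Fᵀ(C ∘ S²)g_F`, with
`C = [N(N-1)]⁻¹(diag{N/N₁,…,N/N₄} - J₄)` and `S²(k,l)` the finite-population covariance. -/
theorem crd_estimator_unbiased_and_variance
    (N : ℕ) (hN : 2 ≤ N) (arm : Fin 4 → ℕ) (harm : ∀ k, 0 < arm k)
    (hsum : ∑ k, arm k = N) (Y : Fin N → Fin 4 → ℝ)
    (g : Fin 4 → ℝ) (hg : g ∈ ({gA, gB, gAB} : Set (Fin 4 → ℝ)))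
    (A : Finset (Fin N → Fin 4))
    (hA : A = Finset.univ.filter
      (fun T => ∀ j, (Finset.univ.filter (fun i => T i = j)).card = arm j))
    (hAne : A.Nonempty) :
    ((A.card : ℝ)⁻¹ * ∑ T ∈ A,
        (2⁻¹ * ∑ k, g k * ((arm k : ℝ)⁻¹ *
          ∑ i ∈ Finset.univ.filter (fun i => T i = k), Y i k))
      = 2⁻¹ * ∑ k, g k * ((N : ℝ)⁻¹ * ∑ i, Y i k)) ∧
    ((A.card : ℝ)⁻¹ * ∑ T ∈ A,
        ((2⁻¹ * ∑ k, g k * ((arm k : ℝ)⁻¹ *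
            ∑ i ∈ Finset.univ.filter (fun i => T i = k), Y i k))
          - 2⁻¹ * ∑ k, g k * ((N : ℝ)⁻¹ * ∑ i, Y i k)) ^ 2
      = 4⁻¹ * ((N : ℝ) - 1) * ∑ k, ∑ l, g k * g l *
          ((((N : ℝ) * ((N : ℝ) - 1))⁻¹
              * ((if k = l then (N : ℝ) / (arm k : ℝ) else 0) - 1))
            * (((N : ℝ) - 1)⁻¹ * ∑ i,
                (Y i k - (N : ℝ)⁻¹ * ∑ i', Y i' k)
                  * (Y i l - (N : ℝ)⁻¹ * ∑ i', Y i' l)))) :=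
  crd_estimator_unbiased_and_variance_general N hN arm harm Y g A hA hAne
end

section
/- Under a balanced 2² completely randomized design (N₁ = N₂ = N₃ = N₄ = N/4), the sampling variance of τ̂_F simplifies to Var_CR(τ̂_F) = N⁻¹ Σ_{k=1}^4 S²(k,k) - N⁻¹ S²_F, where S²_F = (N-1)⁻¹ Σᵢ (τ_{i-F} - τ_F)² is the finite-population variance of the unit-level factorial effect. -/
open Finset

/-!
The error of the contrast estimator under an assignment `T` is `(2n)⁻¹ ∑ᵢ f i (T i)` with
`f i k = g k * (Y i k - Ȳ k)`, and `∑ᵢ f i k = 0` for every `k`. Its second moment over all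
assignments with group sizes `m` only involves the one- and two-unit marginals of the design,
which symmetry fixes: relabelling units preserves the design, so `#{T | T i = k}` does not
depend on `i`, and `#{T | T i = k ∧ T j = l}` does not depend on `j ≠ i` (swap `j` with another
unit, fixing `i`). Double counting gives `N * #{T | T i = k} = #A * m k` and
`(N - 1) * #{T | T i = k ∧ T j = l} = #{T | T i = k} * (m l - δ k l)`, and summing out with
`∑ᵢ f i k = 0` leaves `N (N - 1) ∑_T (∑ᵢ f i (T i))² = #A ∑ᵢ (N ∑ₖ m k f i k² - (∑ₖ m k f i k)²)`.
For balanced groups and `g k² = 1` this is the stated formula.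
-/

def assignmentsWithGroupSizes (ι : Type*) {K : Type*} [Fintype ι] [DecidableEq ι] [Fintype K]
    [DecidableEq K] (m : K → ℕ) : Finset (ι → K) :=
  {T | ∀ k, #{i | T i = k} = m k}

theorem Finset.sum_comp_eq_sum_card_filter_mul {α K R : Type*} [Fintype K] [DecidableEq K]
    [NonAssocSemiring R] (s : Finset α) (g : α → K) (h : K → R) :
    ∑ a ∈ s, h (g a) = ∑ l, #{a ∈ s | g a = l} * h l := by
  rw [← sum_fiberwise' s g h]
  exact sum_congr rfl fun l _ => by rw [sum_const, nsmul_eq_mul]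

namespace assignmentsWithGroupSizes

variable {ι K : Type*} [Fintype ι] [DecidableEq ι] [Fintype K] [DecidableEq K] (m : K → ℕ)

theorem comp_perm_mem_iff (σ : Equiv.Perm ι) {T : ι → K} :
    T ∘ σ ∈ assignmentsWithGroupSizes ι m ↔ T ∈ assignmentsWithGroupSizes ι m := by
  simp only [assignmentsWithGroupSizes, mem_filter, mem_univ, true_and, card_filter,
    Function.comp_apply]
  exact forall_congr' fun k => by rw [Equiv.sum_comp σ (fun i => if T i = k then 1 else 0)]

theorem card_filter_eq_of_perm (σ : Equiv.Perm ι) {P Q : (ι → K) → Prop}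
    [DecidablePred P] [DecidablePred Q] (hPQ : ∀ T, Q T ↔ P (T ∘ σ)) :
    #{T ∈ assignmentsWithGroupSizes ι m | Q T} = #{T ∈ assignmentsWithGroupSizes ι m | P T} := by
  refine card_nbij' (· ∘ σ) (· ∘ σ.symm) ?_ ?_ (fun T _ => ?_) (fun T _ => ?_)
  · intro T hT
    simp only [coe_filter, Set.mem_ofPred_eq] at hT ⊢
    exact ⟨(comp_perm_mem_iff m σ).2 hT.1, (hPQ T).1 hT.2⟩
  · intro T hT
    simp only [coe_filter, Set.mem_ofPred_eq] at hT ⊢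
    refine ⟨(comp_perm_mem_iff m σ.symm).2 hT.1, (hPQ _).2 ?_⟩
    simpa [Function.comp_assoc] using hT.2
  · simp [Function.comp_assoc]
  · simp [Function.comp_assoc]

theorem card_mul_card_filter_apply_eq (i : ι) (k : K) :
    Fintype.card ι * #{T ∈ assignmentsWithGroupSizes ι m | T i = k}
      = #(assignmentsWithGroupSizes ι m) * m k := by
  refine card_mul_eq_card_mul (fun j T => T j = k) (fun j _ => ?_) (fun T hT => ?_)
  · exact card_filter_eq_of_perm m (Equiv.swap i j) (fun T => by simp)
  · exact (mem_filter.1 hT).2 k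

theorem card_filter_erase_apply_eq {T : ι → K} (hT : T ∈ assignmentsWithGroupSizes ι m)
    (i : ι) (l : K) :
    (#{j ∈ univ.erase i | T j = l} : ℝ) = m l - if T i = l then 1 else 0 := by
  rw [filter_erase, ← (mem_filter.1 hT).2 l]
  split_ifs with h
  · exact cast_card_erase_of_mem (by simpa using h)
  · rw [erase_eq_of_notMem (by simpa using h), sub_zero]

theorem card_sub_one_mul_card_filter_pair {i j : ι} (hij : i ≠ j) (k l : K) :
    ((Fintype.card ι : ℝ) - 1) * #{T ∈ assignmentsWithGroupSizes ι m | T i = k ∧ T j = l}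
      = #{T ∈ assignmentsWithGroupSizes ι m | T i = k} * ((m l : ℝ) - if k = l then 1 else 0) := by
  set B := {T ∈ assignmentsWithGroupSizes ι m | T i = k}
  have hconst : ∀ j' ∈ univ.erase i,
      #{T ∈ B | T j' = l} = #{T ∈ assignmentsWithGroupSizes ι m | T i = k ∧ T j = l} := by
    intro j' hj'
    rw [filter_filter]
    refine card_filter_eq_of_perm m (Equiv.swap j j') (fun T => ?_)
    simp [Equiv.swap_apply_of_ne_of_ne hij (ne_of_mem_erase hj').symm]
  calc ((Fintype.card ι : ℝ) - 1) * #{T ∈ assignmentsWithGroupSizes ι m | T i = k ∧ T j = l}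
      = ∑ j' ∈ univ.erase i, (#{T ∈ B | T j' = l} : ℝ) := by
        rw [sum_congr rfl fun j' hj' => congrArg Nat.cast (hconst j' hj'), sum_const,
          nsmul_eq_mul, cast_card_erase_of_mem (mem_univ i), card_univ]
    _ = ∑ T ∈ B, (#{j' ∈ univ.erase i | T j' = l} : ℝ) := by
        exact_mod_cast
          sum_card_bipartiteAbove_eq_sum_card_bipartiteBelow (fun j' (T : ι → K) => T j' = l)
    _ = _ := by
        refine (sum_congr rfl fun T hT => ?_).trans (by rw [sum_const, nsmul_eq_mul])
        obtain ⟨hTA, hTi⟩ := mem_filter.1 hT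
        rw [card_filter_erase_apply_eq m hTA i l, hTi]

theorem card_sub_one_mul_sum_filter_sum_apply (f : ι → K → ℝ) (hf : ∀ k, ∑ j, f j k = 0)
    (i : ι) (k : K) :
    ((Fintype.card ι : ℝ) - 1) * ∑ T ∈ assignmentsWithGroupSizes ι m with T i = k, ∑ j, f j (T j)
      = #{T ∈ assignmentsWithGroupSizes ι m | T i = k}
          * (Fintype.card ι * f i k - ∑ l, m l * f i l) := by
  set B := {T ∈ assignmentsWithGroupSizes ι m | T i = k}
  have hpair : ∀ j ∈ univ.erase i, ∀ l,
      ((Fintype.card ι : ℝ) - 1) * #{T ∈ B | T j = l}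
        = #B * ((m l : ℝ) - if k = l then 1 else 0) := by
    intro j hj l
    rw [filter_filter]
    exact card_sub_one_mul_card_filter_pair m (ne_of_mem_erase hj).symm k l
  have hrest : ∀ l, ∑ j ∈ univ.erase i, f j l = -f i l := fun l => by
    linarith [add_sum_erase univ (f · l) (mem_univ i), hf l]
  have hcross : ((Fintype.card ι : ℝ) - 1) * ∑ j ∈ univ.erase i, ∑ T ∈ B, f j (T j)
      = ∑ l, #B * ((m l : ℝ) - if k = l then 1 else 0) * ∑ j ∈ univ.erase i, f j l := by
    simp_rw [sum_comp_eq_sum_card_filter_mul B (fun T => T _) (f _), mul_sum]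
    rw [sum_comm]
    refine sum_congr rfl fun l _ => sum_congr rfl fun j hj => ?_
    rw [← hpair j hj l]
    ring
  calc ((Fintype.card ι : ℝ) - 1) * ∑ T ∈ B, ∑ j, f j (T j)
      = ((Fintype.card ι : ℝ) - 1)
          * (∑ T ∈ B, f i (T i) + ∑ j ∈ univ.erase i, ∑ T ∈ B, f j (T j)) := by
        simp_rw [← add_sum_erase _ _ (mem_univ i), sum_add_distrib, sum_comm (s := B)]
    _ = ((Fintype.card ι : ℝ) - 1) * (#B * f i k)
          + ∑ l, #B * ((m l : ℝ) - if k = l then 1 else 0) * ∑ j ∈ univ.erase i, f j l := by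
        rw [mul_add, hcross, sum_congr rfl fun T hT => by rw [(mem_filter.1 hT).2], sum_const,
          nsmul_eq_mul]
    _ = _ := by
        have hδ : ∑ l, ((m l : ℝ) - if k = l then 1 else 0) * f i l = ∑ l, m l * f i l - f i k := by
          simp only [sub_mul, ite_mul, one_mul, zero_mul, sum_sub_distrib, sum_ite_eq, mem_univ,
            if_true]
        simp_rw [hrest, mul_neg, sum_neg_distrib, mul_assoc, ← mul_sum, hδ]
        ring

theorem card_mul_card_sub_one_mul_sum_sq (f : ι → K → ℝ) (hf : ∀ k, ∑ j, f j k = 0) :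
    (Fintype.card ι : ℝ) * (Fintype.card ι - 1)
        * ∑ T ∈ assignmentsWithGroupSizes ι m, (∑ i, f i (T i)) ^ 2
      = #(assignmentsWithGroupSizes ι m)
          * ∑ i, (Fintype.card ι * ∑ k, m k * f i k ^ 2 - (∑ k, m k * f i k) ^ 2) := by
  have hsplit : ∀ i, ∑ T ∈ assignmentsWithGroupSizes ι m, f i (T i) * ∑ j, f j (T j)
      = ∑ k, f i k * ∑ T ∈ assignmentsWithGroupSizes ι m with T i = k, ∑ j, f j (T j) :=
    fun i => by
      rw [← sum_fiberwise _ (· i)]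
      refine sum_congr rfl fun k _ => ?_
      rw [mul_sum]
      exact sum_congr rfl fun T hT => by rw [(mem_filter.1 hT).2]
  have hsingle : ∀ i k, (Fintype.card ι : ℝ) * #{T ∈ assignmentsWithGroupSizes ι m | T i = k}
      = #(assignmentsWithGroupSizes ι m) * m k := fun i k => by
    exact_mod_cast card_mul_card_filter_apply_eq m i k
  have hexpand : ∀ i, ∑ k, f i k * (#(assignmentsWithGroupSizes ι m) * m k
        * (Fintype.card ι * f i k - ∑ l, m l * f i l))
      = #(assignmentsWithGroupSizes ι m)
          * (Fintype.card ι * ∑ k, m k * f i k ^ 2 - (∑ k, m k * f i k) ^ 2) := fun i => by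
    rw [sq (∑ k, _), mul_sub, mul_sum, mul_sum, sum_mul, mul_sum, ← sum_sub_distrib]
    exact sum_congr rfl fun k _ => by ring
  calc (Fintype.card ι : ℝ) * (Fintype.card ι - 1)
          * ∑ T ∈ assignmentsWithGroupSizes ι m, (∑ i, f i (T i)) ^ 2
      = ∑ i, ∑ k, f i k * (Fintype.card ι * (((Fintype.card ι : ℝ) - 1)
          * ∑ T ∈ assignmentsWithGroupSizes ι m with T i = k, ∑ j, f j (T j))) := by
        simp_rw [sq, sum_mul]
        rw [sum_comm, mul_sum]
        refine sum_congr rfl fun i _ => ?_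
        rw [hsplit, mul_sum]
        exact sum_congr rfl fun k _ => by ring
    _ = _ := by
        rw [mul_sum]
        refine sum_congr rfl fun i _ => ?_
        rw [← hexpand]
        refine sum_congr rfl fun k _ => ?_
        rw [card_sub_one_mul_sum_filter_sum_apply m f hf, ← mul_assoc (Fintype.card ι : ℝ),
          hsingle]

end assignmentsWithGroupSizes

section centered

variable {ι K : Type*} [Fintype ι]

noncomputable def centered (Y : ι → K → ℝ) (i : ι) (k : K) : ℝ :=
  Y i k - (Fintype.card ι : ℝ)⁻¹ * ∑ j, Y j k

theorem sum_centered (Y : ι → K → ℝ) (k : K) : ∑ i, centered Y i k = 0 := by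
  rcases isEmpty_or_nonempty ι with hι | hι
  · exact sum_of_isEmpty _
  · simp only [centered, sum_sub_distrib, sum_const, card_univ, nsmul_eq_mul]
    field_simp
    ring

theorem sum_mul_centered [Fintype K] (Y : ι → K → ℝ) (c : K → ℝ) (i : ι) :
    ∑ k, c k * centered Y i k
      = ∑ k, c k * Y i k - (Fintype.card ι : ℝ)⁻¹ * ∑ j, ∑ k, c k * Y j k := by
  simp only [centered, mul_sub, sum_sub_distrib, mul_sum, sum_comm (s := univ (α := ι))]
  congr 1
  exact sum_congr rfl fun k _ => sum_congr rfl fun j _ => by ring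

theorem sum_mul_centered_apply [DecidableEq ι] [Fintype K] [DecidableEq K] {m : K → ℕ}
    {T : ι → K} (hT : T ∈ assignmentsWithGroupSizes ι m) (Y : ι → K → ℝ) (c : K → ℝ) :
    ∑ i, c (T i) * centered Y i (T i)
      = ∑ k, c k * (∑ i with T i = k, Y i k - m k * ((Fintype.card ι : ℝ)⁻¹ * ∑ j, Y j k)) := by
  rw [← sum_fiberwise univ T]
  refine sum_congr rfl fun k _ => ?_
  rw [← (mem_filter.1 hT).2 k, mul_sum, ← nsmul_eq_mul, ← sum_const, ← sum_sub_distrib, mul_sum]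
  exact sum_congr rfl fun i hi => by rw [(mem_filter.1 hi).2, centered, mul_sum]

theorem inv_card_mul_sum_sq_contrast_error [DecidableEq ι] [Fintype K] [DecidableEq K] (n : ℕ)
    (hn : n ≠ 0) (hι : 1 < Fintype.card ι)
    (hA : (assignmentsWithGroupSizes ι fun _ : K => n).Nonempty) (Y : ι → K → ℝ) (c : K → ℝ) :
    (#(assignmentsWithGroupSizes ι fun _ : K => n) : ℝ)⁻¹
        * ∑ T ∈ assignmentsWithGroupSizes ι fun _ : K => n,
          (∑ k, c k * ((n : ℝ)⁻¹ * ∑ i with T i = k, Y i k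
            - (Fintype.card ι : ℝ)⁻¹ * ∑ i, Y i k)) ^ 2
      = ((n : ℝ) * (Fintype.card ι - 1))⁻¹ * ∑ i, ∑ k, (c k * centered Y i k) ^ 2
        - ((Fintype.card ι : ℝ) * (Fintype.card ι - 1))⁻¹
          * ∑ i, (∑ k, c k * centered Y i k) ^ 2 := by
  have hA0 : (#(assignmentsWithGroupSizes ι fun _ : K => n) : ℝ) ≠ 0 := by
    exact_mod_cast hA.card_pos.ne'
  have hN0 : (Fintype.card ι : ℝ) ≠ 0 := by exact_mod_cast (zero_lt_one.trans hι).ne'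
  have hN1 : (Fintype.card ι : ℝ) - 1 ≠ 0 := sub_ne_zero.2 (by exact_mod_cast hι.ne')
  have hf : ∀ k, ∑ i, c k * centered Y i k = 0 := fun k => by rw [← mul_sum, sum_centered, mul_zero]
  have herr : ∀ T ∈ assignmentsWithGroupSizes ι fun _ : K => n,
      ∑ k, c k * ((n : ℝ)⁻¹ * ∑ i with T i = k, Y i k - (Fintype.card ι : ℝ)⁻¹ * ∑ i, Y i k)
        = (n : ℝ)⁻¹ * ∑ i, c (T i) * centered Y i (T i) := fun T hT => by
    rw [sum_mul_centered_apply hT, mul_sum]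
    exact sum_congr rfl fun k _ => by field_simp
  have hvar := assignmentsWithGroupSizes.card_mul_card_sub_one_mul_sum_sq (fun _ => n)
    (fun i k => c k * centered Y i k) hf
  simp only [← mul_sum, mul_pow, sum_sub_distrib] at hvar
  rw [mul_comm, ← eq_div_iff (mul_ne_zero hN0 hN1)] at hvar
  rw [sum_congr rfl fun T hT => by rw [herr T hT, mul_pow], ← mul_sum, hvar]
  field_simp

end centered

theorem apply_sq_eq_one_of_mem {g : Fin 4 → ℝ} (hg : g ∈ ({gA, gB, gAB} : Set (Fin 4 → ℝ)))
    (k : Fin 4) : g k ^ 2 = 1 := by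
  rcases hg with rfl | rfl | rfl <;> fin_cases k <;> norm_num [gA, gB, gAB]

/-- Under a balanced `2²` completely randomized design
(`N₁ = N₂ = N₃ = N₄ = N/4`), the sampling variance of `τ̂_F` simplifies to
`N⁻¹ Σ_k S²(k,k) - N⁻¹ S²_F`, where `S²_F` is the finite-population variance of the
unit-level factorial effect `τ_{i-F} = 2⁻¹ g_Fᵀ Y_i`. -/
theorem balanced_crd_variance
    (N n : ℕ) (hn : 0 < n) (hN : N = 4 * n) (Y : Fin N → Fin 4 → ℝ)
    (g : Fin 4 → ℝ) (hg : g ∈ ({gA, gB, gAB} : Set (Fin 4 → ℝ)))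
    (A : Finset (Fin N → Fin 4))
    (hA : A = Finset.univ.filter
      (fun T => ∀ j, (Finset.univ.filter (fun i => T i = j)).card = n))
    (hAne : A.Nonempty) :
    (A.card : ℝ)⁻¹ * ∑ T ∈ A,
        ((2⁻¹ * ∑ k, g k * ((n : ℝ)⁻¹ *
            ∑ i ∈ Finset.univ.filter (fun i => T i = k), Y i k))
          - 2⁻¹ * ∑ k, g k * ((N : ℝ)⁻¹ * ∑ i, Y i k)) ^ 2
      = (N : ℝ)⁻¹ * (∑ k, ((N : ℝ) - 1)⁻¹ * ∑ i,
            (Y i k - (N : ℝ)⁻¹ * ∑ i', Y i' k) ^ 2)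
        - (N : ℝ)⁻¹ * (((N : ℝ) - 1)⁻¹ * ∑ i,
            ((2⁻¹ * ∑ k, g k * Y i k)
              - (N : ℝ)⁻¹ * ∑ i', (2⁻¹ * ∑ k, g k * Y i' k)) ^ 2) := by
  replace hA : A = assignmentsWithGroupSizes (Fin N) (fun _ => n) := by
    rw [hA, assignmentsWithGroupSizes]
    congr
  have hNR : (N : ℝ) = 4 * n := by rw [hN]; push_cast; ring
  have hvar := inv_card_mul_sum_sq_contrast_error n hn.ne' (by rw [Fintype.card_fin]; omega) (hA ▸ hAne) Y g
  simp only [← hA, Fintype.card_fin, mul_pow, apply_sq_eq_one_of_mem hg, one_mul] at hvar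
  have hcenter : ∀ i k, Y i k - (N : ℝ)⁻¹ * ∑ i', Y i' k = centered Y i k := fun i k => by
    rw [centered, Fintype.card_fin]
  have hcontrast : ∀ i, 2⁻¹ * ∑ k, g k * Y i k - (N : ℝ)⁻¹ * ∑ i', 2⁻¹ * ∑ k, g k * Y i' k
      = 2⁻¹ * ∑ k, g k * centered Y i k := fun i => by
    rw [sum_mul_centered, Fintype.card_fin, ← mul_sum]
    ring
  conv_lhs =>
    enter [2, 2, T]
    rw [← mul_sub, ← sum_sub_distrib, mul_pow]
    simp only [← mul_sub]
  simp only [hcenter, hcontrast, mul_pow]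
  rw [← mul_sum, mul_left_comm, hvar, ← mul_sum, ← mul_sum, sum_comm (s := univ (α := Fin 4)), hNR]
  field_simp
  ring
end

section
/- Under a 2² split-plot design, for strictly additive potential outcomes the sampling variances reduce to Var_SP(τ̂_A) = W⁻¹γ_A S²_btw + (4N)⁻¹γ_A(γ_B - 4)S²_in and Var_SP(τ̂_B) = Var_SP(τ̂_AB) = (4N)⁻¹γ_Aγ_B S²_in, where γ_A = r_A + r_A⁻¹ + 2 and γ_B = r_B + r_B⁻¹ + 2. -/
set_option maxHeartbeats 2000000


open Matrix Finset

/-- Under a `2²` split-plot design with parameters `r_A, r_B > 0` and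
`N = WM`, for strictly additive potential outcomes (so that `S²_btw = S²_btw·J₄` and
`S²_in = S²_in·J₄` for scalars `S²_btw, S²_in ≥ 0`) the sampling variances
`Var_SP(τ̂_F) = 4⁻¹(W-1)M·g_Fᵀ(C_btw∘S²_btw)g_F + 4⁻¹W(M-1)·g_Fᵀ(C_in∘S²_in)g_F`
reduce to `Var_SP(τ̂_A) = W⁻¹γ_A S²_btw + (4N)⁻¹γ_A(γ_B-4)S²_in` and
`Var_SP(τ̂_B) = Var_SP(τ̂_AB) = (4N)⁻¹γ_Aγ_B S²_in`, where `γ_A = r_A + r_A⁻¹ + 2`,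
`γ_B = r_B + r_B⁻¹ + 2`. -/
theorem splitplot_variances_strict_additivity
    (W M rA rB Sb Si : ℝ) (hW : 1 < W) (hM : 1 < M)
    (hrA : 0 < rA) (hrB : 0 < rB) (hSb : 0 ≤ Sb) (hSi : 0 ≤ Si)
    (S2b S2i : Matrix (Fin 4) (Fin 4) ℝ)
    (hS2b : S2b = Sb • (Matrix.of fun _ _ => (1 : ℝ)))
    (hS2i : S2i = Si • (Matrix.of fun _ _ => (1 : ℝ))) :
    let N : ℝ := W * M
    let γA : ℝ := rA + rA⁻¹ + 2
    let γB : ℝ := rB + rB⁻¹ + 2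
    let Cbtw : Matrix (Fin 4) (Fin 4) ℝ :=
      (N * (W - 1))⁻¹ •
        !![rA, rA, -1, -1; rA, rA, -1, -1;
           -1, -1, rA⁻¹, rA⁻¹; -1, -1, rA⁻¹, rA⁻¹]
    let Cin : Matrix (Fin 4) (Fin 4) ℝ :=
      (N * W * (M - 1))⁻¹ •
        !![(1 + rA) * rB, -(1 + rA), 0, 0;
           -(1 + rA), (1 + rA) * rB⁻¹, 0, 0;
           0, 0, (1 + rA⁻¹) * rB, -(1 + rA⁻¹);
           0, 0, -(1 + rA⁻¹), (1 + rA⁻¹) * rB⁻¹]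
    let VarSP : (Fin 4 → ℝ) → ℝ := fun g =>
      4⁻¹ * (W - 1) * M * (g ⬝ᵥ ((Cbtw.hadamard S2b) *ᵥ g))
        + 4⁻¹ * W * (M - 1) * (g ⬝ᵥ ((Cin.hadamard S2i) *ᵥ g))
    VarSP gA = W⁻¹ * γA * Sb + (4 * N)⁻¹ * γA * (γB - 4) * Si
      ∧ VarSP gB = (4 * N)⁻¹ * γA * γB * Si
      ∧ VarSP gAB = (4 * N)⁻¹ * γA * γB * Si := by
  subst hS2b hS2i
  have hW0 : W ≠ 0 := by linarith
  have hM0 : M ≠ 0 := by linarith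
  have hW1 : W - 1 ≠ 0 := by intro h; linarith [sub_eq_zero.mp h]
  have hM1 : M - 1 ≠ 0 := by intro h; linarith [sub_eq_zero.mp h]
  have hrA0 : rA ≠ 0 := ne_of_gt hrA
  have hrB0 : rB ≠ 0 := ne_of_gt hrB
  intro N gamA gamB Cbtw Cin VarSP
  refine ⟨?_, ?_, ?_⟩ <;>
    · simp only [VarSP, Cbtw, Cin, N, gamA, gamB]
      simp [gA, gB, gAB, dotProduct, mulVec, Matrix.hadamard, Fin.sum_univ_four,
        Matrix.smul_apply, Matrix.of_apply, smul_eq_mul,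
        Matrix.vecHead, Matrix.vecTail, Matrix.cons_val_zero, Matrix.cons_val_one,
        Function.comp]
      field_simp
      ring
end

section
/- For strictly additive potential outcomes and common arm sizes, Var_SP(τ̂_A) - Var_CR(τ̂_A) = [γ_A/(4(N-1)W)]·{4(N-W) - (W-1)(γ_B-4)}·(S²_btw - S²_in/M), and the bracketed factor 4(N-W) - (W-1)(γ_B-4) is strictly positive whenever M ≥ 2, W ≥ 1 and r_B + r_B⁻¹ - 2 ≤ M-1, since then it is at least (3W+1)(M-1) > 0. -/
/-- For strictly additive potential outcomes and common arm sizes,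
`Var_SP(τ̂_A) - Var_CR(τ̂_A) = [γ_A/(4(N-1)W)]·{4(N-W) - (W-1)(γ_B-4)}·(S²_btw - S²_in/M)`,
and the bracketed factor `4(N-W) - (W-1)(γ_B-4)` is at least `(3W+1)(M-1) > 0` whenever
`M ≥ 2`, `W ≥ 1` and `r_B + r_B⁻¹ - 2 ≤ M - 1`. -/
theorem variance_difference_sp_vs_cr_wholeplot
    (W M rA rB Sb Si : ℝ) (hW : 1 ≤ W) (hM : 2 ≤ M)
    (hrA : 0 < rA) (hrB : 0 < rB) (hSb : 0 ≤ Sb) (hSi : 0 ≤ Si)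
    (hrBM : rB + rB⁻¹ - 2 ≤ M - 1) :
    let N : ℝ := W * M
    let γA : ℝ := rA + rA⁻¹ + 2
    let γB : ℝ := rB + rB⁻¹ + 2
    ((W⁻¹ * γA * Sb + (4 * N)⁻¹ * γA * (γB - 4) * Si)
        - (γA * γB / (4 * (N - 1)))
            * (((W - 1) / W) * Sb + ((M - 1) / M) * Si)
      = (γA / (4 * (N - 1) * W)) * (4 * (N - W) - (W - 1) * (γB - 4))
          * (Sb - Si / M))
    ∧ (3 * W + 1) * (M - 1) ≤ 4 * (N - W) - (W - 1) * (γB - 4)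
    ∧ 0 < 4 * (N - W) - (W - 1) * (γB - 4) := by
  intro N γA γB
  have hW0 : (0:ℝ) < W := lt_of_lt_of_le one_pos hW
  have hM0 : (0:ℝ) < M := lt_of_lt_of_le (by norm_num) hM
  have hN1 : (1:ℝ) < N := by
    have : (1:ℝ) * 1 < W * M := by
      apply mul_lt_mul' hW (lt_of_lt_of_le one_lt_two hM) zero_le_one hW0
    simpa [N] using this
  have hN1' : N - 1 ≠ 0 := sub_ne_zero.mpr (ne_of_gt hN1)
  have hWne : W ≠ 0 := ne_of_gt hW0
  have hMne : M ≠ 0 := ne_of_gt hM0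
  have hγB4 : 0 ≤ γB - 4 := by
    simp only [γB]
    nlinarith [sq_nonneg (rB - 1), mul_pos hrB (inv_pos.mpr hrB),
      mul_inv_cancel₀ (ne_of_gt hrB)]
  have hbound : (3 * W + 1) * (M - 1) ≤ 4 * (N - W) - (W - 1) * (γB - 4) := by
    have h1 : (W - 1) * (γB - 4) ≤ (W - 1) * (M - 1) := by
      apply mul_le_mul_of_nonneg_left _ (by linarith)
      simp only [γB]; linarith
    have h2 : 4 * (N - W) = 4 * W * (M - 1) := by simp [N]; ring
    nlinarith
  have hpos : 0 < 4 * (N - W) - (W - 1) * (γB - 4) := by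
    have : (0:ℝ) < (3 * W + 1) * (M - 1) := by nlinarith
    linarith
  refine ⟨?_, hbound, hpos⟩
  have hNM : N = W * M := rfl
  field_simp [hNM]
  ring
end
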